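/- arXiv:2506.02778 — 2 statements merged into one kernel-verified Lean document; each statement's English description precedes it below -/
import Mathlib

section
/- For real numbers a, b ≤ 0, t > 0 and k ≥ 1, one has the bound |φ_k(t(a+b)) - k! φ_k(ta) φ_k(tb)| ≤ C t² |a| |b| for a constant C depending only on k (scalar version of the splitting error estimate). -/
/-!
`φ_k` is the moment generating function of `1 - ξ` under the measure `ξ^{k-1}/(k-1)! dξ` on
`(0, 1]`, whose total mass is `φ_k(0) = 1/k!`. The error `E(x, y) = φ(0) φ(x + y) - φ(x) φ(y)`
vanishes on both axes, so it is the double integral of its mixed derivative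
`φ(0) φ''(x + y) - φ'(x) φ'(y)`. Since `0 ≤ 1 - ξ ≤ 1`, for arguments `≤ 0` every derivative of
`φ` is bounded by the total mass, which gives `|E(x, y)| ≤ 2 φ(0)² |x| |y|`; then put
`x = t a`, `y = t b`.
-/

open scoped Nat

/-- `φ_k(z) = ∫₀¹ e^{(1-ξ)z} ξ^{k-1}/(k-1)! dξ` for `k ≥ 1`. -/
noncomputable def phiR (k : ℕ) (z : ℝ) : ℝ :=
  ∫ ξ in (0:ℝ)..1, Real.exp ((1 - ξ) * z) * ξ ^ (k - 1) / ((k-1)! : ℝ)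

open MeasureTheory ProbabilityTheory Set Real

lemma abs_sub_le_of_hasDerivAt_Iic {f f' : ℝ → ℝ} {M x : ℝ}
    (hf : ∀ u ≤ 0, HasDerivAt f (f' u) u) (hM : ∀ u ≤ 0, |f' u| ≤ M) (hx : x ≤ 0) :
    |f x - f 0| ≤ M * |x| := by
  simpa using (convex_Iic 0).norm_image_sub_le_of_norm_hasDerivWithin_le
    (fun u hu ↦ (hf u hu).hasDerivWithinAt) hM self_mem_Iic hx

theorem abs_mul_sub_mul_le_of_hasDerivAt {f f' f'' : ℝ → ℝ} {B₁ B₂ x y : ℝ}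
    (hf : ∀ z ≤ 0, HasDerivAt f (f' z) z) (hf' : ∀ z ≤ 0, HasDerivAt f' (f'' z) z)
    (hB₁ : ∀ z ≤ 0, |f' z| ≤ B₁) (hB₂ : ∀ z ≤ 0, |f'' z| ≤ B₂) (hx : x ≤ 0) (hy : y ≤ 0) :
    |f 0 * f (x + y) - f x * f y| ≤ (|f 0| * B₂ + B₁ ^ 2) * |x| * |y| := by
  -- `∂ₛ E(x, s)`, which vanishes at `x = 0`
  have hmixed : ∀ s ≤ 0, |f 0 * f' (x + s) - f x * f' s| ≤ (|f 0| * B₂ + B₁ ^ 2) * |x| := by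
    intro s hs
    have := abs_sub_le_of_hasDerivAt_Iic (M := |f 0| * B₂ + B₁ ^ 2)
      (f := fun u ↦ f 0 * f' (u + s) - f u * f' s)
      (f' := fun u ↦ f 0 * f'' (u + s) - f' u * f' s) (fun u hu ↦ ?_) (fun u hu ↦ ?_) hx
    · simpa using this
    · exact (((hf' _ (by linarith)).comp_add_const u s).const_mul _).sub ((hf u hu).mul_const _)
    · calc |f 0 * f'' (u + s) - f' u * f' s|
          ≤ |f 0| * |f'' (u + s)| + |f' u| * |f' s| := by
            rw [← abs_mul, ← abs_mul]; exact abs_sub _ _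
        _ ≤ |f 0| * B₂ + B₁ ^ 2 := by
            rw [sq]
            gcongr
            exacts [hB₂ _ (by linarith), (abs_nonneg _).trans (hB₁ u hu), hB₁ u hu, hB₁ s hs]
  have := abs_sub_le_of_hasDerivAt_Iic (f := fun s ↦ f 0 * f (x + s) - f x * f s)
    (fun s hs ↦ (((hf _ (by linarith)).comp_const_add x s).const_mul _).sub ((hf s hs).const_mul _))
    hmixed hy
  simpa [mul_comm] using this

section Mgf

variable {Ω : Type*} {m : MeasurableSpace Ω} {μ : Measure Ω} [IsFiniteMeasure μ] {X : Ω → ℝ}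

lemma integrableExpSet_eq_univ_of_abs_le (hXm : AEMeasurable X μ) {R : ℝ}
    (hX : ∀ᵐ ω ∂μ, |X ω| ≤ R) : integrableExpSet X μ = univ := by
  refine eq_univ_of_forall fun t ↦ Integrable.of_bound (C := exp (|t| * R))
    (by fun_prop) ?_
  filter_upwards [hX] with ω hω
  rw [norm_eq_abs, abs_exp, exp_le_exp]
  calc t * X ω ≤ |t| * |X ω| := by rw [← abs_mul]; exact le_abs_self _
    _ ≤ |t| * R := by gcongr

lemma abs_integral_pow_mul_exp_le (hX : ∀ᵐ ω ∂μ, X ω ∈ Icc (0 : ℝ) 1) (n : ℕ) {t : ℝ}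
    (ht : t ≤ 0) : |μ[fun ω ↦ X ω ^ n * exp (t * X ω)]| ≤ μ.real univ := by
  rw [← norm_eq_abs, ← one_mul (μ.real univ)]
  refine norm_integral_le_of_norm_le_const ?_
  filter_upwards [hX] with ω ⟨h0, h1⟩
  rw [norm_eq_abs, abs_of_nonneg (mul_nonneg (pow_nonneg h0 n) (exp_nonneg _))]
  exact mul_le_one₀ (pow_le_one₀ h0 h1) (exp_nonneg _)
    (exp_le_one_iff.2 (mul_nonpos_of_nonpos_of_nonneg ht h0))

theorem abs_mul_mgf_add_sub_le (hXm : AEMeasurable X μ) (hX : ∀ᵐ ω ∂μ, X ω ∈ Icc (0 : ℝ) 1)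
    {x y : ℝ} (hx : x ≤ 0) (hy : y ≤ 0) :
    |μ.real univ * mgf X μ (x + y) - mgf X μ x * mgf X μ y| ≤
      2 * μ.real univ ^ 2 * |x| * |y| := by
  have hinterior : ∀ t, t ∈ interior (integrableExpSet X μ) := by
    rw [integrableExpSet_eq_univ_of_abs_le hXm (R := 1)
      (hX.mono fun ω hω ↦ abs_le.2 ⟨by linarith [hω.1], hω.2⟩), interior_univ]
    exact mem_univ
  have := abs_mul_sub_mul_le_of_hasDerivAt (f := mgf X μ)
    (hf := fun t _ ↦ by simpa using hasDerivAt_mgf (hinterior t))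
    (hf' := fun t _ ↦ by simpa using hasDerivAt_integral_pow_mul_exp_real (hinterior t) 1)
    (fun t ht ↦ abs_integral_pow_mul_exp_le hX 1 ht)
    (fun t ht ↦ abs_integral_pow_mul_exp_le hX 2 ht) hx hy
  rw [mgf_zero', abs_of_nonneg measureReal_nonneg] at this
  linarith

end Mgf

noncomputable def phiMeasure (k : ℕ) : Measure ℝ :=
  (volume.restrict (Ioc 0 1)).withDensity fun ξ ↦ ENNReal.ofReal (ξ ^ (k - 1) / (k - 1)!)

instance (k : ℕ) : IsFiniteMeasure (phiMeasure k) :=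
  isFiniteMeasure_withDensity_ofReal
    (((continuous_pow (k - 1)).div_const _).integrableOn_Icc.mono_set Ioc_subset_Icc_self).2

lemma ae_one_sub_mem_Icc_phiMeasure (k : ℕ) : ∀ᵐ ξ ∂phiMeasure k, 1 - ξ ∈ Icc (0 : ℝ) 1 :=
  withDensity_absolutelyContinuous _ _ <| (ae_restrict_mem measurableSet_Ioc).mono
    fun ξ hξ ↦ ⟨by linarith [hξ.2], by linarith [hξ.1]⟩

lemma phiR_eq_mgf (k : ℕ) : phiR k = mgf (fun ξ ↦ 1 - ξ) (phiMeasure k) := by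
  ext z
  rw [mgf, phiMeasure, integral_withDensity_eq_integral_toReal_smul (by fun_prop)
    (ae_of_all _ fun _ ↦ ENNReal.ofReal_lt_top), phiR,
    intervalIntegral.integral_of_le zero_le_one]
  refine setIntegral_congr_fun measurableSet_Ioc fun ξ hξ ↦ ?_
  rw [ENNReal.toReal_ofReal (by have := hξ.1.le; positivity), smul_eq_mul, mul_comm z]
  ring

lemma phiR_zero {k : ℕ} (hk : 1 ≤ k) : phiR k 0 = (k ! : ℝ)⁻¹ := by
  obtain ⟨k, rfl⟩ := Nat.exists_eq_add_of_le' hk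
  simp [phiR, intervalIntegral.integral_div, Nat.factorial_succ]
  field_simp

theorem abs_phiR_add_sub_le {k : ℕ} (hk : 1 ≤ k) {x y : ℝ} (hx : x ≤ 0) (hy : y ≤ 0) :
    |phiR k (x + y) - k ! * phiR k x * phiR k y| ≤ 2 / k ! * |x| * |y| := by
  have h := abs_mul_mgf_add_sub_le (by fun_prop) (ae_one_sub_mem_Icc_phiMeasure k) hx hy
  rw [← mgf_zero' (X := fun ξ ↦ 1 - ξ), ← phiR_eq_mgf, phiR_zero hk] at h
  have hk! : (0 : ℝ) < k ! := by positivity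
  calc |phiR k (x + y) - k ! * phiR k x * phiR k y|
      = |k ! * ((k ! : ℝ)⁻¹ * phiR k (x + y) - phiR k x * phiR k y)| := by
        field_simp
    _ = k ! * |(k ! : ℝ)⁻¹ * phiR k (x + y) - phiR k x * phiR k y| := by
        rw [abs_mul, abs_of_pos hk!]
    _ ≤ k ! * (2 * (k ! : ℝ)⁻¹ ^ 2 * |x| * |y|) := by gcongr
    _ = 2 / k ! * |x| * |y| := by field_simp

theorem phi_splitting_error_bound (k : ℕ) (hk : 1 ≤ k) :
    ∃ C > 0, ∀ a b t : ℝ, a ≤ 0 → b ≤ 0 → 0 < t →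
      |phiR k (t * (a + b)) - (k ! : ℝ) * phiR k (t * a) * phiR k (t * b)| ≤
        C * t ^ 2 * |a| * |b| := by
  refine ⟨2 / k !, by positivity, fun a b t ha hb ht ↦ ?_⟩
  have h := abs_phiR_add_sub_le hk (mul_nonpos_of_nonneg_of_nonpos ht.le ha)
    (mul_nonpos_of_nonneg_of_nonpos ht.le hb)
  rw [← mul_add, abs_mul, abs_mul, abs_of_pos ht] at h
  linarith
end

section
/- Scalar φ_k smoothing estimate: for every β ∈ [0,1) and k ≥ 1 there is a constant C such that for all λ ≥ 0 and t ∈ (0,1], one has t^β λ^β φ_k(-tλ) ≤ C, where φ_k(z) = ∫₀¹ e^{(1-ξ)z} ξ^{k-1}/(k-1)! dξ. -/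
/-!
Write `μ = tλ`, so that `t^β λ^β = μ^β ≤ 1 + μ`. Bounding `ξ^{k-1}/(k-1)!` by `1` on `[0,1]` gives
`0 ≤ φ_k(-μ) ≤ φ_1(-μ)`, and `φ_1` is explicit: `μ φ_1(-μ) = 1 - e^{-μ}`. Hence `φ_k(-μ) ≤ 1` and
`μ φ_k(-μ) ≤ 1`, so the product is at most `2`.
-/

open scoped Nat

open Real intervalIntegral

lemma rpow_le_one_add_self {x β : ℝ} (hx : 0 ≤ x) (hβ0 : 0 ≤ β) (hβ1 : β ≤ 1) :
    x ^ β ≤ 1 + x := by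
  rcases le_total x 1 with h | h
  · linarith [rpow_le_one hx h hβ0]
  · linarith [rpow_le_self_of_one_le h hβ1]

lemma phiR_one (z : ℝ) : phiR 1 z = ∫ ξ in (0:ℝ)..1, exp ((1 - ξ) * z) := by
  simp [phiR]

lemma phiR_nonneg (k : ℕ) (z : ℝ) : 0 ≤ phiR k z :=
  integral_nonneg zero_le_one fun ξ hξ => by have := hξ.1; positivity

lemma phiR_le_phiR_one (k : ℕ) (z : ℝ) : phiR k z ≤ phiR 1 z := by
  rw [phiR_one]
  refine integral_mono_on zero_le_one (by apply Continuous.intervalIntegrable; fun_prop)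
    (by apply Continuous.intervalIntegrable; fun_prop) fun ξ hξ => ?_
  have hpow : ξ ^ (k - 1) / ((k - 1)! : ℝ) ≤ 1 :=
    div_le_one_of_le₀ ((pow_le_one₀ hξ.1 hξ.2).trans (Nat.one_le_cast.mpr (k - 1).factorial_pos))
      (by positivity)
  rw [mul_div_assoc]
  exact mul_le_of_le_one_right (exp_pos _).le hpow

lemma mul_phiR_one (z : ℝ) : z * phiR 1 z = exp z - 1 := by
  have hderiv : ∀ ξ ∈ Set.uIcc (0:ℝ) 1,
      HasDerivAt (fun x => -exp ((1 - x) * z)) (z * exp ((1 - ξ) * z)) ξ := fun ξ _ => by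
    simpa [mul_comm] using ((((hasDerivAt_id ξ).const_sub 1).mul_const z).exp).fun_neg
  rw [phiR_one, ← integral_const_mul,
    integral_eq_sub_of_hasDerivAt hderiv (by apply Continuous.intervalIntegrable; fun_prop)]
  simp only [sub_zero, one_mul, sub_self, zero_mul, exp_zero]
  ring

lemma phiR_one_neg_le_one {μ : ℝ} (hμ : 0 ≤ μ) : phiR 1 (-μ) ≤ 1 := by
  have hle : phiR 1 (-μ) ≤ ∫ _ in (0:ℝ)..1, (1:ℝ) := by
    rw [phiR_one]
    refine integral_mono_on zero_le_one (by apply Continuous.intervalIntegrable; fun_prop)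
      intervalIntegrable_const fun ξ hξ => exp_le_one_iff.mpr ?_
    nlinarith [hξ.2]
  simpa using hle

lemma one_add_mul_phiR_neg_le_two (k : ℕ) {μ : ℝ} (hμ : 0 ≤ μ) :
    (1 + μ) * phiR k (-μ) ≤ 2 := by
  have hmul : μ * phiR 1 (-μ) ≤ 1 := by
    have := mul_phiR_one (-μ)
    linarith [exp_pos (-μ)]
  calc (1 + μ) * phiR k (-μ) ≤ (1 + μ) * phiR 1 (-μ) :=
        mul_le_mul_of_nonneg_left (phiR_le_phiR_one k _) (by linarith)
    _ = phiR 1 (-μ) + μ * phiR 1 (-μ) := by ring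
    _ ≤ 2 := by linarith [phiR_one_neg_le_one hμ]

theorem scalar_phi_smoothing_estimate_general (β : ℝ) (hβ0 : 0 ≤ β) (hβ1 : β < 1)
    (k : ℕ) :
    ∃ C > 0, ∀ lam t : ℝ, 0 ≤ lam → 0 < t → t ≤ 1 →
      t ^ β * lam ^ β * phiR k (-(t * lam)) ≤ C := by
  refine ⟨2, two_pos, fun lam t hlam ht _ => ?_⟩
  have hμ : 0 ≤ t * lam := mul_nonneg ht.le hlam
  rw [← mul_rpow ht.le hlam]
  calc (t * lam) ^ β * phiR k (-(t * lam)) ≤ (1 + t * lam) * phiR k (-(t * lam)) :=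
        mul_le_mul_of_nonneg_right (rpow_le_one_add_self hμ hβ0 hβ1.le) (phiR_nonneg k _)
    _ ≤ 2 := one_add_mul_phiR_neg_le_two k hμ

theorem scalar_phi_smoothing_estimate (β : ℝ) (hβ0 : 0 ≤ β) (hβ1 : β < 1)
    (k : ℕ) (hk : 1 ≤ k) :
    ∃ C > 0, ∀ lam t : ℝ, 0 ≤ lam → 0 < t → t ≤ 1 →
      t ^ β * lam ^ β * phiR k (-(t * lam)) ≤ C :=
  scalar_phi_smoothing_estimate_general β hβ0 hβ1 k
end
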